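/- Boundary value problem for the linear model: let γ > 0, t₀ < t_f, β ∈ ℝ, K ∈ ℝ. There is a unique solution z of the linear model satisfying z₂(t_f) = β and z₁(t₀) = K; its constants are c₁ = β·e^{t_f} + c₂·e^{−γ t_f} and c₂ = (K − β·e^{t_f − t₀})/(e^{−γ t_f − t₀} + e^{−(1+γ)t₀}), and the point of interest satisfies z₁(t_f) = β + 2·e^{−(1+γ)t_f}·(K − β·e^{t_f − t₀})/(e^{−γ t_f − t₀} + e^{−(1+γ)t₀}). Moreover z₁(t_f) → β as t₀ → −∞ (with γ, t_f, β, K fixed) and z₁(t_f) → β as γ → ∞ (with t₀ < t_f, β, K fixed). -/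

import Mathlib

open Real Filter

/-!
Adding and subtracting the two equations decouples the model into the scalar equations
`u' = -u` for `u = z₁ + z₂` and `v' = -(1 + γ) v` for `v = z₁ - z₂`, so every solution is
`(c₁ e^{-t} + c₂ e^{-(1+γ)t}, c₁ e^{-t} - c₂ e^{-(1+γ)t})`, and the two boundary conditions are
a nonsingular linear system for `(c₁, c₂)`. With `τ = t_f - t₀`, the deviation of `z₁(t_f)` from
the slow manifold equals `2 (K e^{-τ} - β) / (1 + e^{γτ})`, which tends to `0` as `τ → ∞`
(for `γ > 0`) and as `γ → ∞` (for `τ > 0`).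
-/

theorem hasDerivAt_exp_const_mul (a t : ℝ) :
    HasDerivAt (fun t => exp (a * t)) (a * exp (a * t)) t := by
  simpa [mul_comm] using ((hasDerivAt_id t).const_mul a).exp

theorem eq_mul_exp_of_hasDerivAt {f : ℝ → ℝ} {a : ℝ} (hf : ∀ t, HasDerivAt f (a * f t) t)
    (t : ℝ) : f t = f 0 * exp (a * t) := by
  have hderiv : ∀ t, HasDerivAt (fun t => f t * exp (-a * t)) 0 t := fun t =>
    ((hf t).mul (hasDerivAt_exp_const_mul (-a) t)).congr_deriv (by ring)
  have hconst := is_const_of_deriv_eq_zero (fun t => (hderiv t).differentiableAt)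
    (fun t => (hderiv t).deriv) t 0
  simp only [mul_zero, exp_zero, mul_one] at hconst
  rw [← hconst, mul_assoc, ← exp_add]
  simp

def IsLinearModelSolution (γ : ℝ) (z : (ℝ → ℝ) × (ℝ → ℝ)) : Prop :=
  ∀ t, HasDerivAt z.1 ((-1 - γ / 2) * z.1 t + (γ / 2) * z.2 t) t ∧
    HasDerivAt z.2 ((γ / 2) * z.1 t + (-1 - γ / 2) * z.2 t) t

noncomputable def linearModelSolution (γ c₁ c₂ : ℝ) : (ℝ → ℝ) × (ℝ → ℝ) :=
  (fun t => c₁ * exp (-t) + c₂ * exp ((-1 - γ) * t),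
    fun t => c₁ * exp (-t) - c₂ * exp ((-1 - γ) * t))

theorem isLinearModelSolution_linearModelSolution (γ c₁ c₂ : ℝ) :
    IsLinearModelSolution γ (linearModelSolution γ c₁ c₂) := by
  intro t
  have hslow : HasDerivAt (fun t => exp (-t)) (-exp (-t)) t := by
    simpa using hasDerivAt_exp_const_mul (-1) t
  have hfast := hasDerivAt_exp_const_mul (-1 - γ) t
  constructor
  · exact ((hslow.const_mul c₁).add (hfast.const_mul c₂)).congr_deriv
      (by simp only [linearModelSolution]; ring)
  · exact ((hslow.const_mul c₁).sub (hfast.const_mul c₂)).congr_deriv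
      (by simp only [linearModelSolution]; ring)

theorem IsLinearModelSolution.exists_eq_linearModelSolution {γ : ℝ} {z : (ℝ → ℝ) × (ℝ → ℝ)}
    (hz : IsLinearModelSolution γ z) : ∃ c₁ c₂, z = linearModelSolution γ c₁ c₂ := by
  have hsum : ∀ t, HasDerivAt (fun t => z.1 t + z.2 t) (-1 * (z.1 t + z.2 t)) t := fun t =>
    ((hz t).1.add (hz t).2).congr_deriv (by ring)
  have hdiff : ∀ t, HasDerivAt (fun t => z.1 t - z.2 t) ((-1 - γ) * (z.1 t - z.2 t)) t :=
    fun t => ((hz t).1.sub (hz t).2).congr_deriv (by ring)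
  refine ⟨(z.1 0 + z.2 0) / 2, (z.1 0 - z.2 0) / 2,
    Prod.ext (funext fun t => ?_) (funext fun t => ?_)⟩
  all_goals
    have hu := eq_mul_exp_of_hasDerivAt hsum t
    have hv := eq_mul_exp_of_hasDerivAt hdiff t
    rw [neg_one_mul] at hu
    simp only [linearModelSolution]
    linarith

theorem linearModelSolution_boundary_iff (γ t₀ tf β K c₁ c₂ : ℝ) :
    ((linearModelSolution γ c₁ c₂).2 tf = β ∧ (linearModelSolution γ c₁ c₂).1 t₀ = K) ↔
      (c₂ = (K - β * exp (tf - t₀)) / (exp (-γ * tf - t₀) + exp (-(1 + γ) * t₀)) ∧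
        c₁ = β * exp tf + c₂ * exp (-γ * tf)) := by
  simp only [linearModelSolution]
  have hslow : exp (-tf) * exp tf = 1 := by rw [← exp_add, neg_add_cancel, exp_zero]
  have hfast : exp (-γ * tf) * exp (-tf) = exp ((-1 - γ) * tf) := by rw [← exp_add]; ring_nf
  have hfinal : c₁ * exp (-tf) - c₂ * exp ((-1 - γ) * tf) = β ↔
      c₁ = β * exp tf + c₂ * exp (-γ * tf) := by
    constructor <;> intro h
    · linear_combination exp tf * h - (c₁ - c₂ * exp (-γ * tf)) * hslow - c₂ * exp tf * hfast
    · linear_combination exp (-tf) * h + β * hslow + c₂ * hfast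
  rw [and_comm (a := c₂ = _), hfinal]
  refine and_congr_right fun hc₁ => ?_
  have hD : 0 < exp (-γ * tf - t₀) + exp (-(1 + γ) * t₀) := by positivity
  have hinitial : (β * exp tf + c₂ * exp (-γ * tf)) * exp (-t₀) + c₂ * exp ((-1 - γ) * t₀) =
      β * exp (tf - t₀) + c₂ * (exp (-γ * tf - t₀) + exp (-(1 + γ) * t₀)) := by
    simp only [add_mul, mul_add, mul_assoc, ← exp_add]
    ring_nf
  rw [hc₁, hinitial, eq_div_iff hD.ne']
  constructor <;> intro h <;> linarith

theorem linearModelSolution_fst_eq (γ tf β c₁ c₂ : ℝ)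
    (hc₁ : c₁ = β * exp tf + c₂ * exp (-γ * tf)) :
    (linearModelSolution γ c₁ c₂).1 tf = β + 2 * c₂ * exp (-(1 + γ) * tf) := by
  have hslow : exp tf * exp (-tf) = 1 := by rw [← exp_add, add_neg_cancel, exp_zero]
  have hfast : exp (-γ * tf) * exp (-tf) = exp (-(1 + γ) * tf) := by rw [← exp_add]; ring_nf
  have hrate : (-1 - γ) * tf = -(1 + γ) * tf := by ring
  simp only [linearModelSolution, hrate]
  linear_combination exp (-tf) * hc₁ + β * hslow + c₂ * hfast

theorem boundary_deviation_eq (γ t₀ tf β K : ℝ) :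
    2 * exp (-(1 + γ) * tf) * (K - β * exp (tf - t₀))
        / (exp (-γ * tf - t₀) + exp (-(1 + γ) * t₀)) =
      2 * (K * exp (-(tf - t₀)) - β) / (1 + exp (γ * (tf - t₀))) := by
  have hD : exp (-γ * tf - t₀) + exp (-(1 + γ) * t₀) =
      exp (-(1 + γ) * tf) * exp (tf - t₀) * (1 + exp (γ * (tf - t₀))) := by
    simp only [mul_add, mul_one, ← exp_add]
    ring_nf
  rw [hD, exp_neg]
  field_simp

theorem tendsto_div_one_add_exp_nhds_zero {α : Type*} {l : Filter α} {f g : α → ℝ} {c : ℝ}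
    (hf : Tendsto f l (nhds c)) (hg : Tendsto g l atTop) :
    Tendsto (fun x => f x / (1 + exp (g x))) l (nhds 0) :=
  hf.div_atTop (tendsto_atTop_add_const_left _ _ (tendsto_exp_comp_atTop.2 hg))

theorem stmt8 (γ : ℝ) (hγ : 0 < γ) (t₀ tf : ℝ) (ht : t₀ < tf) (β K : ℝ) :
    (∃! z : (ℝ → ℝ) × (ℝ → ℝ),
      (∀ t : ℝ,
        HasDerivAt z.1 ((-1 - γ / 2) * z.1 t + (γ / 2) * z.2 t) t ∧
        HasDerivAt z.2 ((γ / 2) * z.1 t + (-1 - γ / 2) * z.2 t) t) ∧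
      z.2 tf = β ∧ z.1 t₀ = K) ∧
    (∀ z₁ z₂ : ℝ → ℝ,
      (∀ t : ℝ,
        HasDerivAt z₁ ((-1 - γ / 2) * z₁ t + (γ / 2) * z₂ t) t ∧
        HasDerivAt z₂ ((γ / 2) * z₁ t + (-1 - γ / 2) * z₂ t) t) →
      z₂ tf = β → z₁ t₀ = K →
      ∃ c₁ c₂ : ℝ,
        (∀ t : ℝ,
          z₁ t = c₁ * exp (-t) + c₂ * exp ((-1 - γ) * t) ∧
          z₂ t = c₁ * exp (-t) - c₂ * exp ((-1 - γ) * t)) ∧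
        c₂ = (K - β * exp (tf - t₀)) / (exp (-γ * tf - t₀) + exp (-(1 + γ) * t₀)) ∧
        c₁ = β * exp tf + c₂ * exp (-γ * tf) ∧
        z₁ tf = β + 2 * exp (-(1 + γ) * tf) * (K - β * exp (tf - t₀))
                  / (exp (-γ * tf - t₀) + exp (-(1 + γ) * t₀))) ∧
    Tendsto (fun s : ℝ => β + 2 * exp (-(1 + γ) * tf) * (K - β * exp (tf - s))
        / (exp (-γ * tf - s) + exp (-(1 + γ) * s))) atBot (nhds β) ∧
    Tendsto (fun g : ℝ => β + 2 * exp (-(1 + g) * tf) * (K - β * exp (tf - t₀))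
        / (exp (-g * tf - t₀) + exp (-(1 + g) * t₀))) atTop (nhds β) := by
  set c₂ := (K - β * exp (tf - t₀)) / (exp (-γ * tf - t₀) + exp (-(1 + γ) * t₀))
  set c₁ := β * exp tf + c₂ * exp (-γ * tf)
  have hboundary := linearModelSolution_boundary_iff γ t₀ tf β K
  refine ⟨⟨linearModelSolution γ c₁ c₂,
      ⟨isLinearModelSolution_linearModelSolution γ c₁ c₂, (hboundary c₁ c₂).2 ⟨rfl, rfl⟩⟩, ?_⟩,
    ?_, ?_, ?_⟩
  · rintro z ⟨hz, hbc⟩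
    obtain ⟨d₁, d₂, rfl⟩ := IsLinearModelSolution.exists_eq_linearModelSolution hz
    obtain ⟨rfl, rfl⟩ := (hboundary d₁ d₂).1 hbc
    rfl
  · intro z₁ z₂ hz hβ hK
    obtain ⟨d₁, d₂, hd⟩ := IsLinearModelSolution.exists_eq_linearModelSolution (z := (z₁, z₂)) hz
    simp only [Prod.ext_iff] at hd
    obtain ⟨rfl, rfl⟩ := hd
    obtain ⟨hd₂, hd₁⟩ := (hboundary d₁ d₂).1 ⟨hβ, hK⟩
    refine ⟨d₁, d₂, fun t => ⟨rfl, rfl⟩, hd₂, hd₁, ?_⟩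
    rw [linearModelSolution_fst_eq γ tf β d₁ d₂ hd₁, hd₂]
    ring
  · simp_rw [boundary_deviation_eq]
    have hτ : Tendsto (fun s => tf - s) atBot atTop :=
      tendsto_atTop_add_const_left _ _ tendsto_neg_atBot_atTop
    simpa using (tendsto_div_one_add_exp_nhds_zero
      (((tendsto_exp_neg_atTop_nhds_zero.comp hτ).const_mul K).sub_const β |>.const_mul 2)
      (hτ.const_mul_atTop hγ)).const_add β
  · simp_rw [boundary_deviation_eq]
    simpa using (tendsto_div_one_add_exp_nhds_zero tendsto_const_nhds
      (tendsto_id.atTop_mul_const (sub_pos.2 ht))).const_add β
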